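/- arXiv:2602.19245 — 2 statements merged into one kernel-verified Lean document; each statement's English description precedes it below -/
import Mathlib

section
/- (Peeling behaviour.) Suppose ω = 0, 0 < Ξ ≤ 1, and there are constants C ≥ 0 and 0 < b₀ ≤ b ≤ b₁ such that |φₙ| ≤ C for n = 0,…,4. Then |Ψ̃₀| ≤ C b₀⁻² Ξ⁵, |Ψ̃₁| ≤ C b₀⁻¹ Ξ⁴, |Ψ̃₂| ≤ C Ξ³, |Ψ̃₃| ≤ C b₁ Ξ², and |Ψ̃₄| ≤ C b₁² Ξ. -/
open Complex

/-
Rescaling the tetrad by real boosts and unimodular phases multiplies each Weyl scalar by a positive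
weight times a phase, by multilinearity. For ω = 0 the weight of φₙ against Ψ̃ₙ is b²⁻ⁿ Ξⁿ⁻⁵, so
the bound ‖φₙ‖ ≤ C gives ‖Ψ̃ₙ‖ ≤ C bⁿ⁻² Ξ⁵⁻ⁿ, and b is estimated by b₀ or b₁ according to the sign
of n - 2.
-/

theorem MultilinearMap.map_smul_fin_four {R M : Type*} [CommSemiring R] [AddCommMonoid M]
    [Module R M] (f : MultilinearMap R (fun _ : Fin 4 => M) R) (a b c d : R) (x y z w : M) :
    f ![a • x, b • y, c • z, d • w] = a * b * c * d * f ![x, y, z, w] := by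
  have hsmul : (![a • x, b • y, c • z, d • w] : Fin 4 → M) =
      fun i => ![a, b, c, d] i • ![x, y, z, w] i := by
    funext i; fin_cases i <;> rfl
  rw [hsmul, f.map_smul_univ, Fin.prod_univ_four]
  simp [smul_eq_mul]

theorem Complex.norm_ofReal_mul_exp_ofReal_mul_I (r θ : ℝ) :
    ‖(r : ℂ) * exp (θ * I)‖ = |r| := by
  rw [norm_mul, norm_exp_ofReal_mul_I, norm_real, Real.norm_eq_abs, mul_one]

theorem norm_le_mul_of_mul_norm_le {E : Type*} [SeminormedAddGroup E] {w C B : ℝ} {z : E}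
    (hw : 0 < w) (h : w * ‖z‖ ≤ C) (hB : w⁻¹ ≤ B) : ‖z‖ ≤ C * B := by
  have hwz : 0 ≤ w * ‖z‖ := by positivity
  calc ‖z‖ = w⁻¹ * (w * ‖z‖) := by field_simp
    _ ≤ B * C := mul_le_mul hB h hwz ((inv_pos.2 hw).le.trans hB)
    _ = C * B := mul_comm B C

theorem peeling_behaviour_general
    {V : Type*} [AddCommGroup V] [Module ℂ V]
    (Cw : MultilinearMap ℂ (fun _ : Fin 4 => V) ℂ)
    (ℓt kt mt mst : V)
    (Ξ b ϑ ω : ℝ) (hΞpos : 0 < Ξ) (hbpos : 0 < b)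
    (ℓ k m ms : V)
    (hℓ : ℓ = ((Ξ ^ (-2 - 2*ω) * b : ℝ) : ℂ) • ℓt)
    (hk : k = ((Ξ ^ (2*ω) * b⁻¹ : ℝ) : ℂ) • kt)
    (hm : m = (((Ξ⁻¹ : ℝ) : ℂ) * Complex.exp ((ϑ : ℂ) * Complex.I)) • mt)
    (hms : ms = (((Ξ⁻¹ : ℝ) : ℂ) * Complex.exp (-(ϑ : ℂ) * Complex.I)) • mst)
    (d : V → V → V → V → ℂ)
    (hd : ∀ x y z w, d x y z w = (Ξ : ℂ) * Cw ![x, y, z, w])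
    (Ψ0 Ψ1 Ψ2 Ψ3 Ψ4 φ0 φ1 φ2 φ3 φ4 : ℂ)
    (hΨ0 : Ψ0 = Cw ![ℓt, mt, ℓt, mt]) (hΨ1 : Ψ1 = Cw ![ℓt, kt, ℓt, mt])
    (hΨ2 : Ψ2 = Cw ![ℓt, mt, mst, kt]) (hΨ3 : Ψ3 = Cw ![ℓt, kt, mst, kt])
    (hΨ4 : Ψ4 = Cw ![kt, mst, kt, mst])
    (hφ0 : φ0 = d ℓ m ℓ m) (hφ1 : φ1 = d ℓ k ℓ m)
    (hφ2 : φ2 = d ℓ m ms k) (hφ3 : φ3 = d ℓ k ms k)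
    (hφ4 : φ4 = d k ms k ms)
    (hω : ω = 0)
    (C b0 b1 : ℝ) (hb0 : 0 < b0) (hb0b : b0 ≤ b) (hbb1 : b ≤ b1)
    (hbd0 : ‖φ0‖ ≤ C) (hbd1 : ‖φ1‖ ≤ C)
    (hbd2 : ‖φ2‖ ≤ C) (hbd3 : ‖φ3‖ ≤ C)
    (hbd4 : ‖φ4‖ ≤ C) :
    ‖Ψ0‖ ≤ C * (b0 ^ 2)⁻¹ * Ξ ^ 5 ∧
    ‖Ψ1‖ ≤ C * b0⁻¹ * Ξ ^ 4 ∧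
    ‖Ψ2‖ ≤ C * Ξ ^ 3 ∧
    ‖Ψ3‖ ≤ C * b1 * Ξ ^ 2 ∧
    ‖Ψ4‖ ≤ C * b1 ^ 2 * Ξ := by
  subst hω
  have hℓn : ‖((Ξ ^ (-2 - 2 * (0 : ℝ)) * b : ℝ) : ℂ)‖ = b / Ξ ^ 2 := by
    rw [Complex.norm_of_nonneg (by positivity), show -2 - 2 * (0 : ℝ) = -(2 : ℕ) by norm_num,
      Real.rpow_neg hΞpos.le, Real.rpow_natCast, inv_mul_eq_div]
  have hkn : ‖((Ξ ^ (2 * (0 : ℝ)) * b⁻¹ : ℝ) : ℂ)‖ = b⁻¹ := by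
    rw [mul_zero, Real.rpow_zero, one_mul, Complex.norm_of_nonneg (by positivity)]
  have hmn : ‖((Ξ⁻¹ : ℝ) : ℂ) * exp ((ϑ : ℂ) * I)‖ = Ξ⁻¹ := by
    rw [norm_ofReal_mul_exp_ofReal_mul_I, abs_of_pos (inv_pos.2 hΞpos)]
  have hmsn : ‖((Ξ⁻¹ : ℝ) : ℂ) * exp (-(ϑ : ℂ) * I)‖ = Ξ⁻¹ := by
    rw [← ofReal_neg, norm_ofReal_mul_exp_ofReal_mul_I, abs_of_pos (inv_pos.2 hΞpos)]
  have hΞn : ‖(Ξ : ℂ)‖ = Ξ := Complex.norm_of_nonneg hΞpos.le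
  have hw0 : ‖φ0‖ = b ^ 2 / Ξ ^ 5 * ‖Ψ0‖ := by
    rw [hφ0, hd, hℓ, hm, Cw.map_smul_fin_four, ← hΨ0]
    simp only [norm_mul, hℓn, hmn, hΞn]; field_simp
  have hw1 : ‖φ1‖ = b / Ξ ^ 4 * ‖Ψ1‖ := by
    rw [hφ1, hd, hℓ, hk, hm, Cw.map_smul_fin_four, ← hΨ1]
    simp only [norm_mul, hℓn, hkn, hmn, hΞn]; field_simp
  have hw2 : ‖φ2‖ = (Ξ ^ 3)⁻¹ * ‖Ψ2‖ := by
    rw [hφ2, hd, hℓ, hm, hms, hk, Cw.map_smul_fin_four, ← hΨ2]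
    simp only [norm_mul, hℓn, hkn, hmn, hmsn, hΞn]; field_simp
  have hw3 : ‖φ3‖ = (b * Ξ ^ 2)⁻¹ * ‖Ψ3‖ := by
    rw [hφ3, hd, hℓ, hk, hms, Cw.map_smul_fin_four, ← hΨ3]
    simp only [norm_mul, hℓn, hkn, hmsn, hΞn]; field_simp
  have hw4 : ‖φ4‖ = (b ^ 2 * Ξ)⁻¹ * ‖Ψ4‖ := by
    rw [hφ4, hd, hk, hms, Cw.map_smul_fin_four, ← hΨ4]
    simp only [norm_mul, hkn, hmsn, hΞn]; field_simp
  refine ⟨?_, ?_, ?_, ?_, ?_⟩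
  · rw [mul_assoc]
    refine norm_le_mul_of_mul_norm_le (by positivity) (hw0 ▸ hbd0) ?_
    rw [inv_div, div_eq_inv_mul]; gcongr
  · rw [mul_assoc]
    refine norm_le_mul_of_mul_norm_le (by positivity) (hw1 ▸ hbd1) ?_
    rw [inv_div, div_eq_inv_mul]; gcongr
  · exact norm_le_mul_of_mul_norm_le (by positivity) (hw2 ▸ hbd2) (inv_inv _).le
  · rw [mul_assoc]
    refine norm_le_mul_of_mul_norm_le (by positivity) (hw3 ▸ hbd3) ?_
    rw [inv_inv]; gcongr
  · rw [mul_assoc]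
    refine norm_le_mul_of_mul_norm_le (by positivity) (hw4 ▸ hbd4) ?_
    rw [inv_inv]; gcongr

/-- Peeling behaviour: if ω = 0, 0 < Ξ ≤ 1, and the rescaled
Weyl scalars are bounded by C while the boost parameter satisfies
0 < b₀ ≤ b ≤ b₁, then the physical Weyl scalars obey the peeling bounds
|Ψ̃ₙ| ≲ Ξ^(5−n). -/
theorem peeling_behaviour
    {V : Type*} [AddCommGroup V] [Module ℂ V]
    (Cw : MultilinearMap ℂ (fun _ : Fin 4 => V) ℂ)
    (ℓt kt mt mst : V)
    (Ξ b ϑ ω : ℝ) (hΞpos : 0 < Ξ) (hbpos : 0 < b)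
    (ℓ k m ms : V)
    (hℓ : ℓ = ((Ξ ^ (-2 - 2*ω) * b : ℝ) : ℂ) • ℓt)
    (hk : k = ((Ξ ^ (2*ω) * b⁻¹ : ℝ) : ℂ) • kt)
    (hm : m = (((Ξ⁻¹ : ℝ) : ℂ) * Complex.exp ((ϑ : ℂ) * Complex.I)) • mt)
    (hms : ms = (((Ξ⁻¹ : ℝ) : ℂ) * Complex.exp (-(ϑ : ℂ) * Complex.I)) • mst)
    (d : V → V → V → V → ℂ)
    (hd : ∀ x y z w, d x y z w = (Ξ : ℂ) * Cw ![x, y, z, w])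
    (Ψ0 Ψ1 Ψ2 Ψ3 Ψ4 φ0 φ1 φ2 φ3 φ4 : ℂ)
    (hΨ0 : Ψ0 = Cw ![ℓt, mt, ℓt, mt]) (hΨ1 : Ψ1 = Cw ![ℓt, kt, ℓt, mt])
    (hΨ2 : Ψ2 = Cw ![ℓt, mt, mst, kt]) (hΨ3 : Ψ3 = Cw ![ℓt, kt, mst, kt])
    (hΨ4 : Ψ4 = Cw ![kt, mst, kt, mst])
    (hφ0 : φ0 = d ℓ m ℓ m) (hφ1 : φ1 = d ℓ k ℓ m)
    (hφ2 : φ2 = d ℓ m ms k) (hφ3 : φ3 = d ℓ k ms k)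
    (hφ4 : φ4 = d k ms k ms)
    (hω : ω = 0) (hΞ1 : Ξ ≤ 1)
    (C b0 b1 : ℝ) (hC : 0 ≤ C) (hb0 : 0 < b0) (hb0b : b0 ≤ b) (hbb1 : b ≤ b1)
    (hbd0 : ‖φ0‖ ≤ C) (hbd1 : ‖φ1‖ ≤ C)
    (hbd2 : ‖φ2‖ ≤ C) (hbd3 : ‖φ3‖ ≤ C)
    (hbd4 : ‖φ4‖ ≤ C) :
    ‖Ψ0‖ ≤ C * (b0 ^ 2)⁻¹ * Ξ ^ 5 ∧
    ‖Ψ1‖ ≤ C * b0⁻¹ * Ξ ^ 4 ∧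
    ‖Ψ2‖ ≤ C * Ξ ^ 3 ∧
    ‖Ψ3‖ ≤ C * b1 * Ξ ^ 2 ∧
    ‖Ψ4‖ ≤ C * b1 ^ 2 * Ξ :=
  peeling_behaviour_general Cw ℓt kt mt mst Ξ b ϑ ω hΞpos hbpos ℓ k m ms hℓ hk hm hms d hd Ψ0 Ψ1 Ψ2
    Ψ3 Ψ4 φ0 φ1 φ2 φ3 φ4 hΨ0 hΨ1 hΨ2 hΨ3 hΨ4 hφ0 hφ1 hφ2 hφ3 hφ4 hω C b0 b1 hb0 hb0b hbb1 hbd0 hbd1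
    hbd2 hbd3 hbd4
end

section
/- (The surface ς = 0 is a total characteristic of the cylinder Teukolsky operator.) For every fixed T ∈ ℝ, θ ∈ ℝ, 0 ≤ κ < 1 and spin weight 𝔰 ∈ ℝ, as ς → 0⁺ one has A_ςς(ς)/ς² → 0, A_ςφ(ς)/ς² → 0, A_Tς(ς)/ς² → 0, and A_TT(ς)/ς² → (2 − 𝔰²/4)(1 − T²). -/
open Filter Topology

/-- The function F generating the cylinder-time coordinate. -/
noncomputable def Fcyl (κ ς : ℝ) : ℝ :=
  ς ^ 2 * (1 - ς) * (1 - κ ^ 2 * ς) / (1 + κ ^ 2 * ς ^ 2)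

/-- Coefficient A_TT of the conformal Teukolsky operator in the
cylinder-at-spatial-infinity coordinates. -/
noncomputable def A_TT (κ T θ 𝔰 ς : ℝ) : ℝ :=
  (2 - 𝔰 ^ 2 / 4) *
    (2 * Fcyl κ ς * (1 + κ ^ 2 * ς ^ 2 * (1 - T) ^ 2)
      - (Fcyl κ ς) ^ 2 * κ ^ 2 * Real.sin θ ^ 2 * (1 - T)
      - ς ^ 2 * (ς * (1 - T) - 1) * (κ ^ 2 * ς * (1 - T) - 1) * (1 - T)) *
    (1 - T)

/-- Coefficient A_Tς of the conformal Teukolsky operator in the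
cylinder-at-spatial-infinity coordinates. -/
noncomputable def A_Tς (κ T θ 𝔰 ς : ℝ) : ℝ :=
  2 * (2 - 𝔰 ^ 2 / 4) * ς * Fcyl κ ς *
    (1 + κ ^ 2 * (-(Fcyl κ ς) * Real.sin θ ^ 2 + ς ^ 2 * (1 - T)) * (1 - T))

/-- Coefficient A_ςς of the conformal Teukolsky operator in the
cylinder-at-spatial-infinity coordinates. -/
noncomputable def A_ςς (κ T θ 𝔰 ς : ℝ) : ℝ :=
  -(Fcyl κ ς) ^ 2 * (2 - 𝔰 ^ 2 / 4) * κ ^ 2 * Real.sin θ ^ 2 * ς ^ 2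

/-- Coefficient A_ςφ of the conformal Teukolsky operator in the
cylinder-at-spatial-infinity coordinates. -/
noncomputable def A_ςφ (κ T θ 𝔰 ς : ℝ) : ℝ :=
  -2 * Fcyl κ ς * (2 - 𝔰 ^ 2 / 4) * κ * ς ^ 2


/-- Auxiliary: the regular factor of Fcyl. -/
noncomputable def Gaux (κ ς : ℝ) : ℝ :=
  (1 - ς) * (1 - κ ^ 2 * ς) / (1 + κ ^ 2 * ς ^ 2)

lemma Gaux_cont (κ : ℝ) : Continuous (fun ς => Gaux κ ς) := by
  apply Continuous.div (by continuity) (by continuity)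
  intro ς; positivity

lemma Fcyl_eq (κ ς : ℝ) : Fcyl κ ς = ς ^ 2 * Gaux κ ς := by
  unfold Fcyl Gaux
  rw [mul_assoc, mul_div_assoc]

set_option maxHeartbeats 1000000 in
/-- The surface ς = 0 is a total characteristic of the cylinder
Teukolsky operator: as ς → 0⁺, the coefficients A_ςς/ς², A_ςφ/ς², A_Tς/ς²
tend to 0, while A_TT/ς² tends to (2 − 𝔰²/4)(1 − T²). -/
theorem cylinder_total_characteristic
    (κ T θ 𝔰 : ℝ) (hκ0 : 0 ≤ κ) (hκ1 : κ < 1) :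
    Tendsto (fun ς => A_ςς κ T θ 𝔰 ς / ς ^ 2) (𝓝[>] 0) (𝓝 0) ∧
    Tendsto (fun ς => A_ςφ κ T θ 𝔰 ς / ς ^ 2) (𝓝[>] 0) (𝓝 0) ∧
    Tendsto (fun ς => A_Tς κ T θ 𝔰 ς / ς ^ 2) (𝓝[>] 0) (𝓝 0) ∧
    Tendsto (fun ς => A_TT κ T θ 𝔰 ς / ς ^ 2) (𝓝[>] 0)
      (𝓝 ((2 - 𝔰 ^ 2 / 4) * (1 - T ^ 2))) := by
  have hden : ∀ ς : ℝ, (1:ℝ) + κ ^ 2 * ς ^ 2 ≠ 0 := fun ς => by positivity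
  have hG := Gaux_cont κ
  have hne : ∀ᶠ ς in 𝓝[>] (0:ℝ), ς ≠ 0 := by
    filter_upwards [self_mem_nhdsWithin] with ς hς using ne_of_gt hς
  refine ⟨?_, ?_, ?_, ?_⟩
  · have heq : (fun ς => A_ςς κ T θ 𝔰 ς / ς ^ 2) =ᶠ[𝓝[>] 0]
        (fun ς => -(2 - 𝔰 ^ 2 / 4) * κ ^ 2 * Real.sin θ ^ 2 * ς ^ 4 * (Gaux κ ς) ^ 2) := by
      filter_upwards [hne] with ς hς
      unfold A_ςς
      rw [Fcyl_eq]
      field_simp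
    refine Tendsto.congr' heq.symm ?_
    have := ((Continuous.tendsto (by continuity) 0).mono_left
      (nhdsWithin_le_nhds :
        𝓝[>] (0:ℝ) ≤ 𝓝 0) :
      Tendsto (fun ς => -(2 - 𝔰 ^ 2 / 4) * κ ^ 2 * Real.sin θ ^ 2 * ς ^ 4 * (Gaux κ ς) ^ 2)
        (𝓝[>] 0) (𝓝 (-(2 - 𝔰 ^ 2 / 4) * κ ^ 2 * Real.sin θ ^ 2 * (0:ℝ) ^ 4 * (Gaux κ 0) ^ 2)))
    simpa using this
  · have heq : (fun ς => A_ςφ κ T θ 𝔰 ς / ς ^ 2) =ᶠ[𝓝[>] 0]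
        (fun ς => -2 * (2 - 𝔰 ^ 2 / 4) * κ * ς ^ 2 * Gaux κ ς) := by
      filter_upwards [hne] with ς hς
      unfold A_ςφ
      rw [Fcyl_eq]
      field_simp
    refine Tendsto.congr' heq.symm ?_
    have := ((Continuous.tendsto (by continuity) 0).mono_left
      (nhdsWithin_le_nhds : 𝓝[>] (0:ℝ) ≤ 𝓝 0) :
      Tendsto (fun ς => -2 * (2 - 𝔰 ^ 2 / 4) * κ * ς ^ 2 * Gaux κ ς)
        (𝓝[>] 0) (𝓝 (-2 * (2 - 𝔰 ^ 2 / 4) * κ * (0:ℝ) ^ 2 * Gaux κ 0)))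
    simpa using this
  · have heq : (fun ς => A_Tς κ T θ 𝔰 ς / ς ^ 2) =ᶠ[𝓝[>] 0]
        (fun ς => 2 * (2 - 𝔰 ^ 2 / 4) * ς * Gaux κ ς *
          (1 + κ ^ 2 * (-(ς ^ 2 * Gaux κ ς) * Real.sin θ ^ 2 + ς ^ 2 * (1 - T)) * (1 - T))) := by
      filter_upwards [hne] with ς hς
      unfold A_Tς
      rw [Fcyl_eq]
      field_simp
    refine Tendsto.congr' heq.symm ?_
    have := ((Continuous.tendsto (by continuity) 0).mono_left
      (nhdsWithin_le_nhds : 𝓝[>] (0:ℝ) ≤ 𝓝 0) :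
      Tendsto (fun ς => 2 * (2 - 𝔰 ^ 2 / 4) * ς * Gaux κ ς *
          (1 + κ ^ 2 * (-(ς ^ 2 * Gaux κ ς) * Real.sin θ ^ 2 + ς ^ 2 * (1 - T)) * (1 - T)))
        (𝓝[>] 0) (𝓝 (2 * (2 - 𝔰 ^ 2 / 4) * (0:ℝ) * Gaux κ 0 *
          (1 + κ ^ 2 * (-((0:ℝ) ^ 2 * Gaux κ 0) * Real.sin θ ^ 2 + (0:ℝ) ^ 2 * (1 - T)) * (1 - T)))))
    simpa using this
  · have heq : (fun ς => A_TT κ T θ 𝔰 ς / ς ^ 2) =ᶠ[𝓝[>] 0]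
        (fun ς => (2 - 𝔰 ^ 2 / 4) *
          (2 * Gaux κ ς * (1 + κ ^ 2 * ς ^ 2 * (1 - T) ^ 2)
            - ς ^ 2 * (Gaux κ ς) ^ 2 * κ ^ 2 * Real.sin θ ^ 2 * (1 - T)
            - (ς * (1 - T) - 1) * (κ ^ 2 * ς * (1 - T) - 1) * (1 - T)) * (1 - T)) := by
      filter_upwards [hne] with ς hς
      unfold A_TT
      rw [Fcyl_eq]
      field_simp
    refine Tendsto.congr' heq.symm ?_
    have := ((Continuous.tendsto (by continuity) 0).mono_left
      (nhdsWithin_le_nhds : 𝓝[>] (0:ℝ) ≤ 𝓝 0) :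
      Tendsto (fun ς => (2 - 𝔰 ^ 2 / 4) *
          (2 * Gaux κ ς * (1 + κ ^ 2 * ς ^ 2 * (1 - T) ^ 2)
            - ς ^ 2 * (Gaux κ ς) ^ 2 * κ ^ 2 * Real.sin θ ^ 2 * (1 - T)
            - (ς * (1 - T) - 1) * (κ ^ 2 * ς * (1 - T) - 1) * (1 - T)) * (1 - T))
        (𝓝[>] 0) (𝓝 ((2 - 𝔰 ^ 2 / 4) *
          (2 * Gaux κ 0 * (1 + κ ^ 2 * (0:ℝ) ^ 2 * (1 - T) ^ 2)
            - (0:ℝ) ^ 2 * (Gaux κ 0) ^ 2 * κ ^ 2 * Real.sin θ ^ 2 * (1 - T)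
            - ((0:ℝ) * (1 - T) - 1) * (κ ^ 2 * (0:ℝ) * (1 - T) - 1) * (1 - T)) * (1 - T))))
    have h0 : Gaux κ 0 = 1 := by simp [Gaux]
    rw [h0] at this
    convert this using 2
    ring
end
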